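/- arXiv:2605.26985 — 3 statements merged into one kernel-verified Lean document; each statement's English description precedes it below -/
import Mathlib

section
/- Let f: ℝ^d → ℝ be convex, differentiable, and L_f-smooth, and let x⋆ = z⋆. Suppose z^{k+1} solves z^{k+1} = z^k - η_z (z^{k+1} - (2x^{k+1} - x^k)) for η_z > 0. Then for any a_z > 0 and any η_x > 0: (1/η_z) D_f(z^{k+1}; z⋆) ≤ (1/η_z) D_f(z^k; z⋆) - D_f(z^{k+1}; z⋆) + ⟨∇f(z^{k+1}) - ∇f(z⋆), x^{k+1} - x⋆⟩ - ((1 - a_z)/η_z) D_f(z^k; z^{k+1}) - D_f(z⋆; z^{k+1}) + ⟨∇f(z^k) - ∇f(z⋆), x^{k+1} - x^k⟩ + (L_f η_x η_z)·(1/(2 a_z η_x))‖x^{k+1} - x^k‖². -/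
open RealInnerProductSpace

abbrev Euc (d : ℕ) := EuclideanSpace ℝ (Fin d)

/-- Bregman divergence `D_f(u; v) = f(u) - f(v) - ⟨∇f(v), u - v⟩`. -/
noncomputable def breg {d : ℕ} (f : Euc d → ℝ) (f' : Euc d → Euc d)
    (u v : Euc d) : ℝ :=
  f u - f v - ⟪f' v, u - v⟫

/-! The implicit update rearranges to `z^k - z^{k+1} = η_z ((x^k - x^{k+1}) + (z^{k+1} - x^{k+1}))`.
Feeding this into the three-point identity for `D_f` and the symmetrised identity
`D_f(a; b) + D_f(b; a) = ⟨∇f(a) - ∇f(b), a - b⟩`, and using `x⋆ = z⋆`, everything cancels except the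
cross term `⟨∇f(z^{k+1}) - ∇f(z^k), x^{k+1} - x^k⟩`. Young's inequality with weight `a_z / η_z`
together with cocoercivity of the gradient of a convex `L_f`-smooth function,
`‖∇f(u) - ∇f(v)‖² ≤ 2 L_f D_f(u; v)`, bounds it by
`(a_z / η_z) D_f(z^k; z^{k+1}) + (L_f η_z / (2 a_z)) ‖x^{k+1} - x^k‖²`. -/

open Set

section SmoothConvex

variable {E : Type*} [NormedAddCommGroup E] [InnerProductSpace ℝ E] [CompleteSpace E]
  {f : E → ℝ} {f' : E → E}

theorem HasGradientAt.hasDerivAt_comp_add_smul {g v h : E} {t : ℝ}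
    (hf : HasGradientAt f g (v + t • h)) :
    HasDerivAt (fun s : ℝ => f (v + s • h)) ⟪g, h⟫ t := by
  have hline : HasDerivAt (fun s : ℝ => v + s • h) h t := by
    simpa using ((hasDerivAt_id t).smul_const h).const_add v
  simpa [Function.comp_def] using hf.hasFDerivAt.comp_hasDerivAt t hline

theorem ConvexOn.inner_gradient_le_sub (hconv : ConvexOn ℝ univ f) {g v : E}
    (hf : HasGradientAt f g v) (u : E) :
    ⟪g, u - v⟫ ≤ f u - f v := by
  have hline : ConvexOn ℝ univ (fun s : ℝ => f (v + s • (u - v))) := by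
    simpa [Function.comp_def, AffineMap.lineMap_apply_module', add_comm] using
      hconv.comp_affineMap (AffineMap.lineMap v u)
  have hf0 : HasGradientAt f g (v + (0 : ℝ) • (u - v)) := by simpa using hf
  simpa [slope_def_field] using
    hline.le_slope_of_hasDerivAt trivial trivial one_pos hf0.hasDerivAt_comp_add_smul

theorem le_add_inner_gradient_add_sq_norm {L : ℝ} (hf : ∀ x, HasGradientAt f (f' x) x)
    (hLip : ∀ x y, ‖f' x - f' y‖ ≤ L * ‖x - y‖) (u v : E) :
    f u ≤ f v + ⟪f' v, u - v⟫ + L / 2 * ‖u - v‖ ^ 2 := by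
  set h := u - v
  let φ : ℝ → ℝ := fun t => f (v + t • h) - t * ⟪f' v, h⟫ - L / 2 * t ^ 2 * ‖h‖ ^ 2
  have hφ : ∀ t, HasDerivAt φ (⟪f' (v + t • h), h⟫ - ⟪f' v, h⟫ - L * t * ‖h‖ ^ 2) t := by
    intro t
    refine (((hf (v + t • h)).hasDerivAt_comp_add_smul.sub
      ((hasDerivAt_id t).mul_const ⟪f' v, h⟫)).sub
      (((hasDerivAt_pow 2 t).const_mul (L / 2)).mul_const (‖h‖ ^ 2))).congr_deriv ?_
    simp only [Nat.reduceSub, pow_one, Nat.cast_ofNat]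
    ring
  have hanti : AntitoneOn φ (Ici 0) := by
    apply antitoneOn_of_hasDerivWithinAt_nonpos (convex_Ici 0)
      (fun t _ => (hφ t).continuousAt.continuousWithinAt) (fun t _ => (hφ t).hasDerivWithinAt)
    intro t ht
    rw [interior_Ici, mem_Ioi] at ht
    have hnorm : ‖f' (v + t • h) - f' v‖ ≤ L * (t * ‖h‖) := by
      simpa [norm_smul, abs_of_pos ht] using hLip (v + t • h) v
    calc ⟪f' (v + t • h), h⟫ - ⟪f' v, h⟫ - L * t * ‖h‖ ^ 2
        = ⟪f' (v + t • h) - f' v, h⟫ - L * t * ‖h‖ ^ 2 := by rw [inner_sub_left]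
      _ ≤ ‖f' (v + t • h) - f' v‖ * ‖h‖ - L * t * ‖h‖ ^ 2 := by
          gcongr; exact real_inner_le_norm _ _
      _ ≤ L * (t * ‖h‖) * ‖h‖ - L * t * ‖h‖ ^ 2 := by gcongr
      _ = 0 := by ring
  have h01 : φ 1 ≤ φ 0 := hanti (mem_Ici.2 le_rfl) (mem_Ici.2 zero_le_one) zero_le_one
  have hφ1 : φ 1 = f u - ⟪f' v, u - v⟫ - L / 2 * ‖u - v‖ ^ 2 := by simp [φ, h]
  have hφ0 : φ 0 = f v := by simp [φ]
  linarith

theorem sq_norm_sub_gradient_le {L : ℝ} (hL : 0 < L) (hconv : ConvexOn ℝ univ f)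
    (hf : ∀ x, HasGradientAt f (f' x) x) (hLip : ∀ x y, ‖f' x - f' y‖ ≤ L * ‖x - y‖)
    (u v : E) :
    ‖f' u - f' v‖ ^ 2 ≤ 2 * L * (f u - f v - ⟪f' v, u - v⟫) := by
  set G := f' u - f' v
  -- bound `f w` below by convexity at `v` and above by the descent lemma at `u`
  set w := u - L⁻¹ • G
  have hlow := hconv.inner_gradient_le_sub (hf v) w
  have hup := le_add_inner_gradient_add_sq_norm hf hLip w u
  have hwu : ⟪f' u, w - u⟫ = -L⁻¹ * ⟪f' u, G⟫ := by
    rw [show w - u = -L⁻¹ • G by module, real_inner_smul_right]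
  have hwv : ⟪f' v, w - v⟫ = ⟪f' v, u - v⟫ - L⁻¹ * ⟪f' v, G⟫ := by
    rw [show w - v = (u - v) - L⁻¹ • G by module, inner_sub_right, real_inner_smul_right]
  have hnorm : ‖w - u‖ ^ 2 = L⁻¹ ^ 2 * ‖G‖ ^ 2 := by
    rw [show w - u = -L⁻¹ • G by module, norm_smul, mul_pow, Real.norm_eq_abs, sq_abs, neg_sq]
  have hG : ⟪f' u, G⟫ - ⟪f' v, G⟫ = ‖G‖ ^ 2 := by
    rw [← inner_sub_left, real_inner_self_eq_norm_sq]
  have key : ‖G‖ ^ 2 / (2 * L) ≤ f u - f v - ⟪f' v, u - v⟫ := by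
    have : ‖G‖ ^ 2 / (2 * L) = L⁻¹ * ‖G‖ ^ 2 - L / 2 * (L⁻¹ ^ 2 * ‖G‖ ^ 2) := by
      field_simp; ring
    rw [this, ← hnorm, ← hG]
    linarith
  rwa [div_le_iff₀ (by positivity), mul_comm] at key

theorem real_inner_sub_gradient_le {L : ℝ} (hL : 0 < L) (hconv : ConvexOn ℝ univ f)
    (hf : ∀ x, HasGradientAt f (f' x) x) (hLip : ∀ x y, ‖f' x - f' y‖ ≤ L * ‖x - y‖)
    {c : ℝ} (hc : 0 < c) (u v w : E) :
    ⟪f' v - f' u, w⟫ ≤ c * (f u - f v - ⟪f' v, u - v⟫) + L / (2 * c) * ‖w‖ ^ 2 := by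
  have hcoco := sq_norm_sub_gradient_le hL hconv hf hLip u v
  have hyoung := two_mul_le_add_mul_sq (a := ‖f' v - f' u‖) (b := ‖w‖) (div_pos hc hL)
  rw [norm_sub_rev] at hyoung
  have hscale : c / L * ‖f' u - f' v‖ ^ 2 ≤ 2 * c * (f u - f v - ⟪f' v, u - v⟫) := by
    calc c / L * ‖f' u - f' v‖ ^ 2 ≤ c / L * (2 * L * (f u - f v - ⟪f' v, u - v⟫)) := by
          gcongr
      _ = 2 * c * (f u - f v - ⟪f' v, u - v⟫) := by field_simp
  have hinv : (c / L)⁻¹ = 2 * (L / (2 * c)) := by field_simp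
  rw [hinv] at hyoung
  have hcs := real_inner_le_norm (f' v - f' u) w
  rw [norm_sub_rev] at hcs
  linarith
end SmoothConvex

section Bregman

variable {d : ℕ} (f : Euc d → ℝ) (f' : Euc d → Euc d)

theorem breg_eq_breg_add_breg_add_inner (a b c : Euc d) :
    breg f f' a c = breg f f' b c + breg f f' a b + ⟪f' b - f' c, a - b⟫ := by
  simp only [breg, inner_sub_left, inner_sub_right]
  ring

theorem breg_add_breg_swap (a b : Euc d) :
    breg f f' a b + breg f f' b a = ⟪f' a - f' b, a - b⟫ := by
  simp only [breg, inner_sub_right, real_inner_comm a, real_inner_comm b]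
  ring

end Bregman

/-- Descent lemma for the dual (z) update of APGD. -/
theorem apgd_dual_descent {d : ℕ} (Lf ηx ηz az : ℝ)
    (hL : 0 < Lf) (hηx : 0 < ηx) (hηz : 0 < ηz) (haz : 0 < az)
    (f : Euc d → ℝ) (f' : Euc d → Euc d)
    (hfconv : ConvexOn ℝ Set.univ f)
    (hfdiff : ∀ x, HasGradientAt f (f' x) x)
    (hflip : ∀ x y, ‖f' x - f' y‖ ≤ Lf * ‖x - y‖)
    (xs zs : Euc d) (hzx : xs = zs)
    (xk xk1 zk zk1 : Euc d)
    (hz : zk1 = zk - ηz • (zk1 - ((2 : ℝ) • xk1 - xk))) :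
    (1 / ηz) * breg f f' zk1 zs
      ≤ (1 / ηz) * breg f f' zk zs - breg f f' zk1 zs
        + ⟪f' zk1 - f' zs, xk1 - xs⟫
        - ((1 - az) / ηz) * breg f f' zk zk1
        - breg f f' zs zk1
        + ⟪f' zk - f' zs, xk1 - xk⟫
        + (Lf * ηx * ηz) * (1 / (2 * az * ηx)) * ‖xk1 - xk‖ ^ 2 := by
  subst hzx
  have hstep : zk - zk1 = ηz • ((xk - xk1) + (zk1 - xk1)) := by
    linear_combination (norm := module) -hz
  have hcross : (1 / ηz) * ⟪f' zk1 - f' xs, zk - zk1⟫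
      = ⟪f' zk1 - f' xs, xk - xk1⟫ + ⟪f' zk1 - f' xs, zk1 - xk1⟫ := by
    rw [hstep, real_inner_smul_right, inner_add_right, one_div, inv_mul_cancel_left₀ hηz.ne']
  have hsym := breg_add_breg_swap f f' zk1 xs
  have hyoung : ⟪f' zk1 - f' zk, xk1 - xk⟫
      ≤ az / ηz * breg f f' zk zk1 + Lf / (2 * (az / ηz)) * ‖xk1 - xk‖ ^ 2 :=
    real_inner_sub_gradient_le hL hfconv hfdiff hflip (div_pos haz hηz) zk zk1 (xk1 - xk)
  have hcoef : Lf * ηx * ηz * (1 / (2 * az * ηx)) = Lf / (2 * (az / ηz)) := by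
    field_simp
  rw [hcoef, breg_eq_breg_add_breg_add_inner f f' zk zk1 xs]
  simp only [inner_sub_left, inner_sub_right] at hcross hsym hyoung ⊢
  linear_combination hyoung - hcross + hsym
end

section
/- Let K: ℝ^{d_x} → ℝ^{d_y} be a linear operator with operator norm ‖K‖, let f be convex, differentiable, L_f-smooth, let x⋆ ∈ ℝ^{d_x}, y⋆ ∈ ℝ^{d_y}, z⋆ = x⋆, and let η_x, η_y, η_z > 0 satisfy ‖K‖² η_x η_y + L_f η_x η_z ≤ 1. Then for any x, y, z, the quantity Ψ = (1/(2η_x))‖x - x⋆‖² + (1/(2η_y))‖y - y⋆‖² + (1/η_z) D_f(z; z⋆) ± ⟨y - y⋆, K(x - x⋆)⟩ ± ⟨∇f(z) - ∇f(z⋆), x - x⋆⟩ (with either choice of signs) satisfies 0 ≤ Ψ ≤ (1/η_x)‖x - x⋆‖² + (1/η_y)‖y - y⋆‖² + (2/η_z) D_f(z; z⋆). -/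
/-!
Both coupling terms are absorbed by the diagonal part
`Q = ‖x - x⋆‖² / (2ηx) + ‖y - y⋆‖² / (2ηy) + D_f(z; z⋆) / ηz`.
By Cauchy–Schwarz and Young,
`|⟪y - y⋆, K (x - x⋆)⟫| ≤ ηy ‖K‖² / 2 ‖x - x⋆‖² + ‖y - y⋆‖² / (2ηy)` and
`|⟪∇f z - ∇f z⋆, x - x⋆⟫| ≤ ηz L / 2 ‖x - x⋆‖² + ‖∇f z - ∇f z⋆‖² / (2ηz L)`,
and the last term is at most `D_f(z; z⋆) / ηz` by the cocoercivity bound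
`‖∇f z - ∇f z⋆‖² ≤ 2L D_f(z; z⋆)` of convex `L`-smooth functions.
The step-size condition makes the two coefficients of `‖x - x⋆‖²` add up to at most `1 / (2ηx)`.
Hence the coupling `C` satisfies `|C| ≤ Q`, i.e. `0 ≤ Q + C ≤ 2Q`.
-/

open RealInnerProductSpace

section Gradient

variable {E : Type*} [NormedAddCommGroup E] [InnerProductSpace ℝ E] [CompleteSpace E]
  {f : E → ℝ}

theorem HasGradientAt.hasDerivAt_comp_lineMap {g a b : E} {t : ℝ}
    (hf : HasGradientAt f g (AffineMap.lineMap a b t)) :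
    HasDerivAt (f ∘ AffineMap.lineMap a b) ⟪g, b - a⟫ t :=
  (hasGradientAt_iff_hasFDerivAt.mp hf).comp_hasDerivAt t AffineMap.hasDerivAt_lineMap

theorem ConvexOn.add_inner_gradient_le {s : Set E} {g a b : E} (hf : ConvexOn ℝ s f)
    (ha : a ∈ s) (hb : b ∈ s) (hg : HasGradientAt f g a) :
    f a + ⟪g, b - a⟫ ≤ f b := by
  have hslope := (hf.comp_affineMap (AffineMap.lineMap a b)).le_slope_of_hasDerivAt
    (by simpa using ha) (by simpa using hb) one_pos
    (HasGradientAt.hasDerivAt_comp_lineMap (by simpa using hg))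
  simp only [slope_def_field, Function.comp_apply, AffineMap.lineMap_apply_zero,
    AffineMap.lineMap_apply_one, sub_zero, div_one] at hslope
  linarith

/-- The descent lemma. -/
theorem le_add_inner_gradient_add_sq_of_lipschitz {f' : E → E} {Lf : ℝ}
    (hf : ∀ x, HasGradientAt f (f' x) x) (hlip : ∀ x y, ‖f' x - f' y‖ ≤ Lf * ‖x - y‖)
    (a b : E) :
    f b ≤ f a + ⟪f' a, b - a⟫ + Lf / 2 * ‖b - a‖ ^ 2 := by
  set ℓ := AffineMap.lineMap (k := ℝ) a b
  -- `φ` is antitone on `[0, 1]`; comparing its endpoints is the claim.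
  set φ : ℝ → ℝ := fun t => f (ℓ t) - t * ⟪f' a, b - a⟫ - Lf / 2 * t ^ 2 * ‖b - a‖ ^ 2
  have hφ : ∀ t : ℝ, HasDerivAt φ (⟪f' (ℓ t) - f' a, b - a⟫ - Lf * t * ‖b - a‖ ^ 2) t := by
    intro t
    have := (((hf (ℓ t)).hasDerivAt_comp_lineMap.sub ((hasDerivAt_id t).mul_const
      ⟪f' a, b - a⟫)).sub (((hasDerivAt_pow 2 t).const_mul (Lf / 2)).mul_const (‖b - a‖ ^ 2)))
    refine this.congr_deriv ?_
    rw [inner_sub_left]; push_cast; ring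
  have hφ' : ∀ t ∈ interior (Set.Icc (0 : ℝ) 1), deriv φ t ≤ 0 := by
    intro t ht
    rw [interior_Icc] at ht
    rw [(hφ t).deriv, sub_nonpos]
    calc ⟪f' (ℓ t) - f' a, b - a⟫ ≤ ‖f' (ℓ t) - f' a‖ * ‖b - a‖ := real_inner_le_norm _ _
      _ ≤ Lf * ‖ℓ t - a‖ * ‖b - a‖ := by gcongr; exact hlip _ _
      _ = Lf * t * ‖b - a‖ ^ 2 := by
          rw [← vsub_eq_sub, AffineMap.lineMap_vsub_left, vsub_eq_sub, norm_smul,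
            Real.norm_of_nonneg ht.1.le]
          ring
  have hanti := antitoneOn_of_deriv_nonpos (convex_Icc 0 1)
    (fun t _ => (hφ t).continuousAt.continuousWithinAt)
    (fun t _ => (hφ t).differentiableAt.differentiableWithinAt) hφ'
  have h10 : φ 1 ≤ φ 0 := hanti (by norm_num) (by norm_num) zero_le_one
  simp only [φ, ℓ, AffineMap.lineMap_apply_one, AffineMap.lineMap_apply_zero] at h10
  linarith

/-- Cocoercivity of the gradient of a convex function with `Lf`-Lipschitz gradient. -/
theorem sq_norm_sub_gradient_le_of_convexOn {f' : E → E} {Lf : ℝ} (hL : 0 < Lf)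
    (hconv : ConvexOn ℝ Set.univ f) (hf : ∀ x, HasGradientAt f (f' x) x)
    (hlip : ∀ x y, ‖f' x - f' y‖ ≤ Lf * ‖x - y‖) (z w : E) :
    ‖f' z - f' w‖ ^ 2 ≤ 2 * Lf * (f z - f w - ⟪f' w, z - w⟫) := by
  set g := f' z - f' w
  -- Compare the descent step `u` from `z` with the supporting hyperplane of `f` at `w`.
  set u := z - Lf⁻¹ • g
  have hdescent := le_add_inner_gradient_add_sq_of_lipschitz hf hlip z u
  have hsupport := hconv.add_inner_gradient_le (Set.mem_univ w) (Set.mem_univ u) (hf w)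
  have hgg : Lf⁻¹ * ⟪f' z, g⟫ - Lf⁻¹ * ⟪f' w, g⟫ = Lf⁻¹ * ‖g‖ ^ 2 := by
    rw [← mul_sub, ← inner_sub_left, real_inner_self_eq_norm_sq]
  have huz : u - z = -(Lf⁻¹ • g) := by simp [u]
  have huw : u - w = (z - w) - Lf⁻¹ • g := by simp only [u]; abel
  rw [huz, inner_neg_right, real_inner_smul_right, norm_neg, norm_smul, Real.norm_eq_abs,
    abs_inv, abs_of_pos hL] at hdescent
  rw [huw, inner_sub_right, real_inner_smul_right] at hsupport
  have key : ‖g‖ ^ 2 / (2 * Lf) ≤ f z - f w - ⟪f' w, z - w⟫ := by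
    have : Lf / 2 * (Lf⁻¹ * ‖g‖) ^ 2 = ‖g‖ ^ 2 / (2 * Lf) := by field_simp
    have : Lf⁻¹ * ‖g‖ ^ 2 = ‖g‖ ^ 2 / (2 * Lf) + ‖g‖ ^ 2 / (2 * Lf) := by field_simp; ring
    linarith
  rwa [div_le_iff₀ (by positivity), mul_comm] at key

end Gradient

theorem mul_le_div_two_mul_sq_add_sq_div {ε : ℝ} (hε : 0 < ε) (a b : ℝ) :
    a * b ≤ ε / 2 * a ^ 2 + b ^ 2 / (2 * ε) := by
  have hsq : ε / 2 * a ^ 2 + b ^ 2 / (2 * ε) - a * b = (ε * a - b) ^ 2 / (2 * ε) := by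
    field_simp; ring
  rw [← sub_nonneg, hsq]
  positivity

theorem coupling_le_of_step {k a b g D Lf ηx ηy ηz : ℝ} (hL : 0 < Lf) (hηx : 0 < ηx)
    (hηy : 0 < ηy) (hηz : 0 < ηz) (hgD : g ^ 2 ≤ 2 * Lf * D)
    (hstep : k ^ 2 * ηx * ηy + Lf * ηx * ηz ≤ 1) :
    k * a * b + g * a ≤ 1 / (2 * ηx) * a ^ 2 + 1 / (2 * ηy) * b ^ 2 + 1 / ηz * D := by
  have hK : k * a * b ≤ ηy * k ^ 2 / 2 * a ^ 2 + 1 / (2 * ηy) * b ^ 2 := by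
    have := mul_le_div_two_mul_sq_add_sq_div hηy (k * a) b
    rw [mul_pow] at this
    linarith [show b ^ 2 / (2 * ηy) = 1 / (2 * ηy) * b ^ 2 by ring]
  have hg : g * a ≤ ηz * Lf / 2 * a ^ 2 + 1 / ηz * D := by
    have hηzL : 0 < ηz * Lf := mul_pos hηz hL
    have := mul_le_div_two_mul_sq_add_sq_div hηzL a g
    have : g ^ 2 / (2 * (ηz * Lf)) ≤ 1 / ηz * D := by
      rw [div_le_iff₀ (by positivity)]
      calc g ^ 2 ≤ 2 * Lf * D := hgD
        _ = 1 / ηz * D * (2 * (ηz * Lf)) := by field_simp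
    linarith
  have hcoef : (ηy * k ^ 2 + ηz * Lf) / 2 * a ^ 2 ≤ 1 / (2 * ηx) * a ^ 2 := by
    have hsum : ηy * k ^ 2 + ηz * Lf ≤ 1 / ηx := by
      rw [le_div_iff₀ hηx]; linarith
    rw [show 1 / (2 * ηx) = 1 / ηx / 2 by ring]
    gcongr
  linarith

theorem lyapunov_bounds_primal_dual_general {dx dy : ℕ} (Lf ηx ηy ηz : ℝ)
    (hL : 0 < Lf) (hηx : 0 < ηx) (hηy : 0 < ηy) (hηz : 0 < ηz)
    (K : Euc dx →L[ℝ] Euc dy)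
    (hstep : ‖K‖ ^ 2 * ηx * ηy + Lf * ηx * ηz ≤ 1)
    (f : Euc dx → ℝ) (f' : Euc dx → Euc dx)
    (hconv : ConvexOn ℝ Set.univ f)
    (hdiff : ∀ x, HasGradientAt f (f' x) x)
    (hlip : ∀ x y, ‖f' x - f' y‖ ≤ Lf * ‖x - y‖)
    (xs zs : Euc dx) (ys : Euc dy)
    (s t : ℝ) (hs : s = 1 ∨ s = -1) (ht : t = 1 ∨ t = -1) :
    ∀ (x z : Euc dx) (y : Euc dy),
      0 ≤ (1 / (2 * ηx)) * ‖x - xs‖ ^ 2 + (1 / (2 * ηy)) * ‖y - ys‖ ^ 2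
            + (1 / ηz) * breg f f' z zs
            + s * ⟪y - ys, K (x - xs)⟫ + t * ⟪f' z - f' zs, x - xs⟫ ∧
      (1 / (2 * ηx)) * ‖x - xs‖ ^ 2 + (1 / (2 * ηy)) * ‖y - ys‖ ^ 2
            + (1 / ηz) * breg f f' z zs
            + s * ⟪y - ys, K (x - xs)⟫ + t * ⟪f' z - f' zs, x - xs⟫
        ≤ (1 / ηx) * ‖x - xs‖ ^ 2 + (1 / ηy) * ‖y - ys‖ ^ 2
            + (2 / ηz) * breg f f' z zs := by
  intro x z y
  have hs1 : |s| = 1 := by rcases hs with rfl | rfl <;> norm_num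
  have ht1 : |t| = 1 := by rcases ht with rfl | rfl <;> norm_num
  have hcoco : ‖f' z - f' zs‖ ^ 2 ≤ 2 * Lf * breg f f' z zs :=
    sq_norm_sub_gradient_le_of_convexOn hL hconv hdiff hlip z zs
  have hcoupling : |s * ⟪y - ys, K (x - xs)⟫ + t * ⟪f' z - f' zs, x - xs⟫|
      ≤ 1 / (2 * ηx) * ‖x - xs‖ ^ 2 + 1 / (2 * ηy) * ‖y - ys‖ ^ 2 + 1 / ηz * breg f f' z zs :=
    calc |s * ⟪y - ys, K (x - xs)⟫ + t * ⟪f' z - f' zs, x - xs⟫|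
        ≤ |s * ⟪y - ys, K (x - xs)⟫| + |t * ⟪f' z - f' zs, x - xs⟫| := abs_add_le _ _
      _ = |⟪y - ys, K (x - xs)⟫| + |⟪f' z - f' zs, x - xs⟫| := by
          rw [abs_mul, abs_mul, hs1, ht1, one_mul, one_mul]
      _ ≤ ‖K‖ * ‖x - xs‖ * ‖y - ys‖ + ‖f' z - f' zs‖ * ‖x - xs‖ := by
          gcongr
          · exact (abs_real_inner_le_norm _ _).trans
              (by rw [mul_comm]; gcongr; exact K.le_opNorm _)
          · exact abs_real_inner_le_norm _ _
      _ ≤ _ := coupling_le_of_step hL hηx hηy hηz hcoco hstep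
  obtain ⟨hlower, hupper⟩ := abs_le.mp hcoupling
  constructor
  · linarith
  · linarith [show (1 / ηx) * ‖x - xs‖ ^ 2 + (1 / ηy) * ‖y - ys‖ ^ 2 + (2 / ηz) * breg f f' z zs
      = 2 * (1 / (2 * ηx) * ‖x - xs‖ ^ 2 + 1 / (2 * ηy) * ‖y - ys‖ ^ 2
        + 1 / ηz * breg f f' z zs) by ring]

/-- Bounds on the primal--dual Lyapunov function, for either choice of the two
signs `s, t ∈ {+1, -1}` on the coupling terms. -/
theorem lyapunov_bounds_primal_dual {dx dy : ℕ} (Lf ηx ηy ηz : ℝ)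
    (hL : 0 < Lf) (hηx : 0 < ηx) (hηy : 0 < ηy) (hηz : 0 < ηz)
    (K : Euc dx →L[ℝ] Euc dy)
    (hstep : ‖K‖ ^ 2 * ηx * ηy + Lf * ηx * ηz ≤ 1)
    (f : Euc dx → ℝ) (f' : Euc dx → Euc dx)
    (hconv : ConvexOn ℝ Set.univ f)
    (hdiff : ∀ x, HasGradientAt f (f' x) x)
    (hlip : ∀ x y, ‖f' x - f' y‖ ≤ Lf * ‖x - y‖)
    (xs zs : Euc dx) (ys : Euc dy) (hxz : zs = xs)
    (s t : ℝ) (hs : s = 1 ∨ s = -1) (ht : t = 1 ∨ t = -1) :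
    ∀ (x z : Euc dx) (y : Euc dy),
      0 ≤ (1 / (2 * ηx)) * ‖x - xs‖ ^ 2 + (1 / (2 * ηy)) * ‖y - ys‖ ^ 2
            + (1 / ηz) * breg f f' z zs
            + s * ⟪y - ys, K (x - xs)⟫ + t * ⟪f' z - f' zs, x - xs⟫ ∧
      (1 / (2 * ηx)) * ‖x - xs‖ ^ 2 + (1 / (2 * ηy)) * ‖y - ys‖ ^ 2
            + (1 / ηz) * breg f f' z zs
            + s * ⟪y - ys, K (x - xs)⟫ + t * ⟪f' z - f' zs, x - xs⟫
        ≤ (1 / ηx) * ‖x - xs‖ ^ 2 + (1 / ηy) * ‖y - ys‖ ^ 2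
            + (2 / ηz) * breg f f' z zs :=
  lyapunov_bounds_primal_dual_general Lf ηx ηy ηz hL hηx hηy hηz K hstep f f' hconv hdiff hlip xs zs
    ys s t hs ht
end

section
/- Let θ = max{1/(1 + μ_g η_x), 1/(1 + μ_{h*} η_y), 2/(2 + η_z)} with μ_g, μ_{h*} > 0, and let parameters η_x = min{1/√(L_f μ_g), √(μ_{h*}/(‖K‖² μ_g))}, η_y = (1/2)√(μ_g/(‖K‖² μ_{h*})), η_z = (1/2)√(μ_g/L_f), where L_f > 0 and ‖K‖ > 0. Then ‖K‖² η_x η_y + L_f η_x η_z ≤ 1, and 1/(1 - θ) ≤ C·(1 + √(L_f/μ_g) + ‖K‖/√(μ_g μ_{h*})) for some absolute constant C; consequently θ^k ≤ ε whenever k ≥ C·(1 + √(L_f/μ_g) + ‖K‖/√(μ_g μ_{h*}))·log(1/ε) for ε ∈ (0,1). -/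
/-!
Write `L_f = x²`, `μ_g = y²`, `μ_{h*} = z²`; then every square root in the parameters disappears and,
with `E = 1 + x/y + ‖K‖/(y z)`, one computes `1/(μ_g η_x) = max (x/y) (‖K‖/(y z))`,
`1/(μ_{h*} η_y) = 2‖K‖/(y z)` and `2/η_z = 4x/y`. Each of the three terms of `θ` has the form
`1/(1+t)` with `1 + 1/t ≤ 4E`, hence `θ ≤ 1 - 1/(4E)`, which gives `1/(1-θ) ≤ 4E` and
`θ^k ≤ exp(-k/(4E)) ≤ ε` as soon as `k ≥ 4E log(1/ε)`.
-/

open Real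

lemma exists_pos_sq_eq {a : ℝ} (ha : 0 < a) : ∃ x, 0 < x ∧ x ^ 2 = a :=
  ⟨√a, sqrt_pos.2 ha, sq_sqrt ha.le⟩

lemma one_div_one_add_le_one_sub_one_div {t M : ℝ} (ht : 0 < t) (hM : 1 + 1 / t ≤ M) :
    1 / (1 + t) ≤ 1 - 1 / M := by
  have hM' : 1 / M ≤ 1 / (1 + 1 / t) := one_div_le_one_div_of_le (by positivity) hM
  have key : 1 / (1 + 1 / t) = 1 - 1 / (1 + t) := by field_simp; ring
  linarith

lemma one_div_one_sub_le_of_le_one_sub_one_div {θ M : ℝ} (hM : 0 < M) (hθ : θ ≤ 1 - 1 / M) :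
    1 / (1 - θ) ≤ M := by
  simpa using one_div_le_one_div_of_le (by positivity) (by linarith : 1 / M ≤ 1 - θ)

lemma pow_le_of_le_one_sub_one_div {θ M ε : ℝ} {k : ℕ} (hθ₀ : 0 ≤ θ) (hθ : θ ≤ 1 - 1 / M)
    (hM : 0 < M) (hε : 0 < ε) (hk : M * log (1 / ε) ≤ k) : θ ^ k ≤ ε := by
  have hθexp : θ ≤ exp (-(1 / M)) := by linarith [add_one_le_exp (-(1 / M))]
  rw [one_div, log_inv] at hk
  have hlog : -log ε ≤ k / M := (le_div_iff₀' hM).2 hk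
  calc θ ^ k ≤ exp (-(1 / M)) ^ k := pow_le_pow_left₀ hθ₀ hθexp k
    _ = exp (-(k / M)) := by rw [← exp_nat_mul]; ring_nf
    _ ≤ exp (log ε) := exp_le_exp.2 (by linarith)
    _ = ε := exp_log hε

/- `η_x, η_y, η_z` and `1 + √(L_f/μ_g) + ‖K‖/√(μ_g μ_{h*})` at `L_f = x²`, `μ_g = y²`,
`μ_{h*} = z²`, `‖K‖ = K`. -/
noncomputable def etaX (x y z K : ℝ) : ℝ := min (1 / (x * y)) (z / (K * y))

noncomputable def etaY (y z K : ℝ) : ℝ := 1 / 2 * (y / (K * z))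

noncomputable def etaZ (x y : ℝ) : ℝ := 1 / 2 * (y / x)

noncomputable def complexityFactor (x y z K : ℝ) : ℝ := 1 + x / y + K / (y * z)

section Parameters

variable {x y z K : ℝ} (hx : 0 < x) (hy : 0 < y) (hz : 0 < z) (hK : 0 < K)
include hx hy hz hK

lemma stepsize_condition :
    K ^ 2 * etaX x y z K * etaY y z K + x ^ 2 * etaX x y z K * etaZ x y ≤ 1 := by
  have hdual : K ^ 2 * etaX x y z K * etaY y z K ≤ 1 / 2 :=
    calc K ^ 2 * etaX x y z K * etaY y z K ≤ K ^ 2 * (z / (K * y)) * etaY y z K := by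
          unfold etaY; gcongr; exact min_le_right _ _
      _ = 1 / 2 := by unfold etaY; field_simp
  have hprimal : x ^ 2 * etaX x y z K * etaZ x y ≤ 1 / 2 :=
    calc x ^ 2 * etaX x y z K * etaZ x y ≤ x ^ 2 * (1 / (x * y)) * etaZ x y := by
          unfold etaZ; gcongr; exact min_le_left _ _
      _ = 1 / 2 := by unfold etaZ; field_simp
  linarith

lemma etaX_pos : 0 < etaX x y z K := lt_min (by positivity) (by positivity)

lemma one_div_sq_mul_etaX_le : 1 / (y ^ 2 * etaX x y z K) ≤ x / y + K / (y * z) := by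
  rcases min_choice (1 / (x * y)) (z / (K * y)) with h | h <;> rw [etaX, h]
  · have : 1 / (y ^ 2 * (1 / (x * y))) = x / y := by field_simp
    linarith [div_pos hK (mul_pos hy hz)]
  · have : 1 / (y ^ 2 * (z / (K * y))) = K / (y * z) := by field_simp
    linarith [div_pos hx hy]

lemma contraction_le_one_sub :
    max (max (1 / (1 + y ^ 2 * etaX x y z K)) (1 / (1 + z ^ 2 * etaY y z K))) (2 / (2 + etaZ x y))
      ≤ 1 - 1 / (4 * complexityFactor x y z K) := by
  have ha : 0 < x / y := by positivity
  have hb : 0 < K / (y * z) := by positivity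
  have hX := one_div_sq_mul_etaX_le hx hy hz hK
  have hY : 1 / (z ^ 2 * etaY y z K) = 2 * (K / (y * z)) := by unfold etaY; field_simp
  have hZ : 2 / (2 + etaZ x y) = 1 / (1 + y / (4 * x)) := by unfold etaZ; field_simp; ring
  refine max_le (max_le ?_ ?_) ?_
  · have := etaX_pos hx hy hz hK
    exact one_div_one_add_le_one_sub_one_div (by positivity) (by unfold complexityFactor; linarith)
  · exact one_div_one_add_le_one_sub_one_div (by unfold etaY; positivity)
      (by unfold complexityFactor; linarith)
  · rw [hZ]
    refine one_div_one_add_le_one_sub_one_div (by positivity) ?_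
    rw [one_div_div, complexityFactor, mul_div_assoc]
    linarith

end Parameters

/-- Iteration complexity computation for the accelerated primal--dual methods
in the smooth regime: with the stated parameter choices, the stepsize
condition holds and `1/(1-θ)` is bounded by an absolute constant times
`1 + √(L_f/μ_g) + ‖K‖/√(μ_g μ_{h*})`, yielding complexity
`O((√(L_f/μ_g) + ‖K‖/√(μ_g μ_{h*})) log(1/ε))`. -/
theorem smooth_regime_complexity :
    ∃ C : ℝ, 0 < C ∧
      ∀ Lf μg μh Kn : ℝ, 0 < Lf → 0 < μg → 0 < μh → 0 < Kn →
        ∀ ηx ηy ηz θ : ℝ,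
          ηx = min (1 / Real.sqrt (Lf * μg)) (Real.sqrt (μh / (Kn ^ 2 * μg))) →
          ηy = (1 / 2) * Real.sqrt (μg / (Kn ^ 2 * μh)) →
          ηz = (1 / 2) * Real.sqrt (μg / Lf) →
          θ = max (max (1 / (1 + μg * ηx)) (1 / (1 + μh * ηy))) (2 / (2 + ηz)) →
          Kn ^ 2 * ηx * ηy + Lf * ηx * ηz ≤ 1 ∧
          1 / (1 - θ)
            ≤ C * (1 + Real.sqrt (Lf / μg) + Kn / Real.sqrt (μg * μh)) ∧
          ∀ ε : ℝ, 0 < ε → ε < 1 →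
            ∀ k : ℕ,
              C * (1 + Real.sqrt (Lf / μg) + Kn / Real.sqrt (μg * μh))
                  * Real.log (1 / ε) ≤ k →
              θ ^ k ≤ ε := by
  refine ⟨4, by norm_num, ?_⟩
  intro Lf μg μh K hLf hμg hμh hK ηx ηy ηz θ hηx hηy hηz hθ
  obtain ⟨x, hx, rfl⟩ := exists_pos_sq_eq hLf
  obtain ⟨y, hy, rfl⟩ := exists_pos_sq_eq hμg
  obtain ⟨z, hz, rfl⟩ := exists_pos_sq_eq hμh
  simp only [← mul_pow, ← div_pow, sqrt_sq_eq_abs, abs_mul, abs_div, abs_of_pos hx,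
    abs_of_pos hy, abs_of_pos hz, abs_of_pos hK] at hηx hηy hηz ⊢
  subst hηx hηy hηz
  have hθ₀ : 0 ≤ θ := hθ ▸ le_max_of_le_right (by positivity)
  have hθle : θ ≤ 1 - 1 / (4 * complexityFactor x y z K) :=
    hθ.trans_le (contraction_le_one_sub hx hy hz hK)
  have hE : 0 < 4 * complexityFactor x y z K := by unfold complexityFactor; positivity
  refine ⟨stepsize_condition hx hy hz hK, one_div_one_sub_le_of_le_one_sub_one_div hE hθle,
    fun ε hε _ k hk => pow_le_of_le_one_sub_one_div hθ₀ hθle hE hε ?_⟩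
  simpa only [complexityFactor, mul_assoc] using hk
end
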